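/- arXiv:0903.5412 — 6 statements merged into one kernel-verified Lean document; each statement's English description precedes it below -/
import Mathlib

section
/- Let X be a complex Banach space and A, B bounded operators on X such that [A,B] = y ⊗ φ for a nonzero vector y ∈ X and a nonzero functional φ ∈ X*. If in addition the ranks of [A²,B], [A,B²], [A²,B²], and [AB,BA] are all at most 1, then φ(y) = 0, and consequently [A,B]² = 0. -/
/-!
Write `C = [A, B] = y ⊗ φ`. Then `[A², B] = A y ⊗ φ + y ⊗ φ A` and `[A, B²] = y ⊗ φ B + B y ⊗ φ`,
and an operator `u ⊗ f + y ⊗ g` of rank at most one with `f, y ≠ 0` has `u ∈ K y` or `g ∈ K f`.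
So `y` is an eigenvector of `A` or `φ` is an eigenvector of the transpose of `A`, and likewise
for `B`. A common eigenvector `y` gives `C y = 0`, a common eigenfunctional `φ` gives `φ C = 0`,
and either forces `φ y = 0`. In a mixed case, say `A y = α y` and `φ B = β φ`, we get
`[A², B] = y ⊗ f` with `f = α φ + φ A`, and then `[A², B²] = [A², B] B + B [A², B]` has rank at
most one only if `B y ∈ K y` or `f B = μ f`; since `f B = β f + φ(y) φ`, the latter gives
`φ y = 0` or `φ A ∈ K φ`. Finally `C² = φ(y) C`.
-/

open Module Submodule

section Rank

variable {K V W : Type*} [Field K] [AddCommGroup V] [Module K V] [AddCommGroup W] [Module K W]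

theorem LinearMap.not_linearIndependent_pair_of_rank_le_one {T : V →ₗ[K] W} (hT : T.rank ≤ 1)
    (a b : V) : ¬LinearIndependent K ![T a, T b] := by
  intro h
  have hle : span K (Set.range ![T a, T b]) ≤ LinearMap.range T := by
    rw [span_le, Matrix.range_cons, Matrix.range_cons, Matrix.range_empty]
    simp [Set.insert_subset_iff]
  have h2 : Module.rank K (span K (Set.range ![T a, T b])) = 2 := by
    have hne : T b ≠ T a := fun e => zero_ne_one (h.injective (by simp [e])).symm
    rw [rank_span h]
    simp [Cardinal.mk_insert, hne]
    norm_num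
  have := h2 ▸ (Submodule.rank_mono hle).trans hT
  norm_num at this

theorem mem_span_singleton_or_mem_span_singleton_of_rank_le_one {f g : Dual K V} {u y : V}
    (hy : y ≠ 0) (hf : f ≠ 0) (hr : (f.smulRight u + g.smulRight y).rank ≤ 1) :
    u ∈ K ∙ y ∨ g ∈ K ∙ f := by
  rw [or_iff_not_imp_left]
  intro hu
  have hind : LinearIndependent K ![u, y] := by
    rw [LinearIndependent.pair_symm_iff, LinearIndependent.pair_iff' hy]
    exact fun a ha => hu (mem_span_singleton.2 ⟨a, ha⟩)
  obtain ⟨x₀, hx₀⟩ : ∃ x, f x ≠ 0 := by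
    by_contra! h
    exact hf (LinearMap.ext h)
  refine mem_span_singleton.2 ⟨g x₀ / f x₀, LinearMap.ext fun x => ?_⟩
  -- `f x₀ • x - f x • x₀ ∈ ker f` is mapped to `(f x₀ * g x - f x * g x₀) • y`; if that is
  -- nonzero, it is independent of the image of `x₀`, which has a nonzero `u`-component
  suffices f x₀ * g x - f x * g x₀ = 0 by
    simp only [LinearMap.smul_apply, smul_eq_mul]
    field_simp
    linear_combination -this
  by_contra he
  apply LinearMap.not_linearIndependent_pair_of_rank_le_one hr x₀ (f x₀ • x - f x • x₀)
  rw [LinearIndependent.pair_iff]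
  intro s t hst
  obtain ⟨hs, ht⟩ := hind.eq_zero_of_pair (s := s * f x₀)
    (t := s * g x₀ + t * (f x₀ * g x - f x * g x₀)) (by
      rw [← hst]
      simp only [LinearMap.add_apply, LinearMap.smulRight_apply, map_sub, map_smul]
      module)
  obtain rfl : s = 0 := (mul_eq_zero.1 hs).resolve_right hx₀
  exact ⟨rfl, (mul_eq_zero.1 (by simpa using ht)).resolve_right he⟩

end Rank

section Commutator

variable {R V : Type*} [CommRing R] [AddCommGroup V] [Module R V]
  {A B : End R V} {φ : Dual R V} {y : V}

theorem sq_mul_sub_mul_sq_of_commutator_eq_smulRight (hAB : A * B - B * A = φ.smulRight y) :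
    A ^ 2 * B - B * A ^ 2 = φ.smulRight (A y) + (φ ∘ₗ A).smulRight y := by
  rw [show A ^ 2 * B - B * A ^ 2 = A * (A * B - B * A) + (A * B - B * A) * A by noncomm_ring, hAB]
  ext x
  simp

theorem mul_sq_sub_sq_mul_of_commutator_eq_smulRight (hAB : A * B - B * A = φ.smulRight y) :
    A * B ^ 2 - B ^ 2 * A = (φ ∘ₗ B).smulRight y + φ.smulRight (B y) := by
  rw [show A * B ^ 2 - B ^ 2 * A = (A * B - B * A) * B + B * (A * B - B * A) by noncomm_ring, hAB]
  ext x
  simp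

theorem comp_mul_of_commutator_eq_smulRight (hAB : A * B - B * A = φ.smulRight y) :
    φ ∘ₗ (A * B) = φ ∘ₗ (B * A) + φ y • φ := by
  rw [← sub_eq_iff_eq_add', ← LinearMap.comp_sub, hAB]
  ext x
  simp [mul_comm]

end Commutator

section Field

variable {K V : Type*} [Field K] [AddCommGroup V] [Module K V]
  {A B : End K V} {φ : Dual K V} {y : V}

theorem apply_eq_zero_of_apply_mem_span_singleton (hAB : A * B - B * A = φ.smulRight y)
    (hy : y ≠ 0) (hA : A y ∈ K ∙ y) (hB : B y ∈ K ∙ y) : φ y = 0 := by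
  obtain ⟨a, ha⟩ := mem_span_singleton.1 hA
  obtain ⟨b, hb⟩ := mem_span_singleton.1 hB
  have h := LinearMap.congr_fun hAB y
  simp only [LinearMap.sub_apply, Module.End.mul_apply, LinearMap.smulRight_apply, ← ha, ← hb,
    map_smul, smul_smul, mul_comm a b, sub_self] at h
  exact (smul_eq_zero.1 h.symm).resolve_right hy

theorem apply_eq_zero_of_comp_mem_span_singleton (hAB : A * B - B * A = φ.smulRight y)
    (hφ : φ ≠ 0) (hA : φ ∘ₗ A ∈ K ∙ φ) (hB : φ ∘ₗ B ∈ K ∙ φ) : φ y = 0 := by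
  obtain ⟨a, ha⟩ := mem_span_singleton.1 hA
  obtain ⟨b, hb⟩ := mem_span_singleton.1 hB
  have h := comp_mul_of_commutator_eq_smulRight hAB
  rw [Module.End.mul_eq_comp, Module.End.mul_eq_comp, ← LinearMap.comp_assoc,
    ← LinearMap.comp_assoc, ← ha, ← hb, LinearMap.smul_comp, LinearMap.smul_comp, ← ha, ← hb,
    smul_smul, smul_smul, mul_comm, left_eq_add] at h
  exact (smul_eq_zero.1 h).resolve_right hφ

theorem apply_eq_zero_or_mem_span_singleton_of_rank_sq_commutator_sq_le_one
    (hAB : A * B - B * A = φ.smulRight y) (hy : y ≠ 0) (hφ : φ ≠ 0)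
    (h3 : (A ^ 2 * B ^ 2 - B ^ 2 * A ^ 2).rank ≤ 1) (hA : A y ∈ K ∙ y) (hB : φ ∘ₗ B ∈ K ∙ φ) :
    φ y = 0 ∨ B y ∈ K ∙ y ∨ φ ∘ₗ A ∈ K ∙ φ := by
  obtain ⟨α, hα⟩ := mem_span_singleton.1 hA
  obtain ⟨β, hβ⟩ := mem_span_singleton.1 hB
  obtain ⟨f, hf⟩ : ∃ f : Dual K V, f = α • φ + φ ∘ₗ A := ⟨_, rfl⟩
  have hφA : φ ∘ₗ A = f - α • φ := by rw [hf]; abel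
  have hA2 : A ^ 2 * B - B * A ^ 2 = f.smulRight y := by
    rw [sq_mul_sub_mul_sq_of_commutator_eq_smulRight hAB, ← hα]
    ext x
    simp [hf, add_smul, smul_smul, mul_comm]
  have hfB : f ∘ₗ B = β • f + φ y • φ := by
    rw [hf, LinearMap.add_comp, LinearMap.smul_comp, ← hβ, LinearMap.comp_assoc,
      ← Module.End.mul_eq_comp, comp_mul_of_commutator_eq_smulRight hAB, Module.End.mul_eq_comp,
      ← LinearMap.comp_assoc, ← hβ, LinearMap.smul_comp]
    module
  by_cases hf0 : f = 0
  · refine Or.inr (Or.inr ?_)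
    rw [hφA, hf0, zero_sub]
    exact neg_mem (smul_mem _ _ (mem_span_singleton_self φ))
  rw [mul_sq_sub_sq_mul_of_commutator_eq_smulRight hA2, add_comm] at h3
  obtain hBy | hfB' := mem_span_singleton_or_mem_span_singleton_of_rank_le_one hy hf0 h3
  · exact Or.inr (Or.inl hBy)
  obtain ⟨μ, hμ⟩ := mem_span_singleton.1 hfB'
  have key : (μ - β) • f = φ y • φ := by
    linear_combination (norm := module) hμ + hfB
  by_cases hμβ : μ = β
  · rw [hμβ, sub_self, zero_smul] at key
    exact Or.inl ((smul_eq_zero.1 key.symm).resolve_right hφ)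
  refine Or.inr (Or.inr ?_)
  rw [hφA]
  refine sub_mem (mem_span_singleton.2 ⟨(μ - β)⁻¹ * φ y, ?_⟩)
    (smul_mem _ _ (mem_span_singleton_self φ))
  rw [mul_smul, ← key, smul_smul, inv_mul_cancel₀ (sub_ne_zero.2 hμβ), one_smul]

theorem dual_apply_eq_zero_of_commutator_eq_smulRight (hAB : A * B - B * A = φ.smulRight y)
    (hy : y ≠ 0) (hφ : φ ≠ 0) (h1 : (A ^ 2 * B - B * A ^ 2).rank ≤ 1)
    (h2 : (A * B ^ 2 - B ^ 2 * A).rank ≤ 1) (h3 : (A ^ 2 * B ^ 2 - B ^ 2 * A ^ 2).rank ≤ 1) :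
    φ y = 0 := by
  have hBA : B * A - A * B = (-φ).smulRight y := by
    rw [← neg_sub, hAB]
    ext x
    simp
  have h3' : (B ^ 2 * A ^ 2 - A ^ 2 * B ^ 2).rank ≤ 1 := by
    rwa [← neg_sub, LinearMap.rank, LinearMap.range_neg]
  -- `(B, A, -φ)` satisfies the same hypotheses, which settles the second mixed case
  have hspan_neg : K ∙ (-φ) = K ∙ φ := by rw [← Set.neg_singleton, span_neg]
  rw [sq_mul_sub_mul_sq_of_commutator_eq_smulRight hAB] at h1
  rw [mul_sq_sub_sq_mul_of_commutator_eq_smulRight hAB, add_comm] at h2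
  have common_eigenvector := apply_eq_zero_of_apply_mem_span_singleton hAB hy
  have common_eigenfunctional := apply_eq_zero_of_comp_mem_span_singleton hAB hφ
  obtain hA | hA := mem_span_singleton_or_mem_span_singleton_of_rank_le_one hy hφ h1 <;>
    obtain hB | hB := mem_span_singleton_or_mem_span_singleton_of_rank_le_one hy hφ h2
  · exact common_eigenvector hA hB
  · obtain h | hB' | hA' :=
      apply_eq_zero_or_mem_span_singleton_of_rank_sq_commutator_sq_le_one hAB hy hφ h3 hA hB
    · exact h
    · exact common_eigenvector hA hB'
    · exact common_eigenfunctional hA' hB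
  · obtain h | hA' | hB' :=
      apply_eq_zero_or_mem_span_singleton_of_rank_sq_commutator_sq_le_one hBA hy
        (neg_ne_zero.2 hφ) h3' hB (by rwa [LinearMap.neg_comp, hspan_neg, neg_mem_iff])
    · exact neg_eq_zero.1 h
    · exact common_eigenvector hA' hB
    · rw [LinearMap.neg_comp, hspan_neg, neg_mem_iff] at hB'
      exact common_eigenfunctional hA hB'
  · exact common_eigenfunctional hA hB

end Field

theorem stmt_1_general {X : Type*} [NormedAddCommGroup X] [NormedSpace ℂ X]
    (A B : X →L[ℂ] X) (y : X) (φ : X →L[ℂ] ℂ) (hy : y ≠ 0) (hφ : φ ≠ 0)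
    (hAB : A * B - B * A = φ.smulRight y)
    (h1 : LinearMap.rank ((A ^ 2 * B - B * A ^ 2 : X →L[ℂ] X) : X →ₗ[ℂ] X) ≤ 1)
    (h2 : LinearMap.rank ((A * B ^ 2 - B ^ 2 * A : X →L[ℂ] X) : X →ₗ[ℂ] X) ≤ 1)
    (h3 : LinearMap.rank ((A ^ 2 * B ^ 2 - B ^ 2 * A ^ 2 : X →L[ℂ] X) : X →ₗ[ℂ] X) ≤ 1) :
    φ y = 0 ∧ (A * B - B * A) ^ 2 = 0 := by
  have hcoe (T : X →L[ℂ] X) : (T : X →ₗ[ℂ] X) = ContinuousLinearMap.toLinearMapRingHom T := rfl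
  simp only [hcoe, map_sub, map_mul, map_pow] at h1 h2 h3
  have hAB' : (A : X →ₗ[ℂ] X) * B - B * A = (φ : X →ₗ[ℂ] ℂ).smulRight y :=
    LinearMap.ext fun x => by simpa using DFunLike.congr_fun hAB x
  have hφ' : (φ : X →ₗ[ℂ] ℂ) ≠ 0 := fun h => hφ (ContinuousLinearMap.coe_injective h)
  have hφy : φ y = 0 := by
    simpa using dual_apply_eq_zero_of_commutator_eq_smulRight hAB' hy hφ' h1 h2 h3
  refine ⟨hφy, ?_⟩
  rw [hAB, sq]
  ext x
  simp [hφy]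

theorem stmt_1 {X : Type*} [NormedAddCommGroup X] [NormedSpace ℂ X] [CompleteSpace X]
    (A B : X →L[ℂ] X) (y : X) (φ : X →L[ℂ] ℂ) (hy : y ≠ 0) (hφ : φ ≠ 0)
    (hAB : A * B - B * A = φ.smulRight y)
    (h1 : LinearMap.rank ((A ^ 2 * B - B * A ^ 2 : X →L[ℂ] X) : X →ₗ[ℂ] X) ≤ 1)
    (h2 : LinearMap.rank ((A * B ^ 2 - B ^ 2 * A : X →L[ℂ] X) : X →ₗ[ℂ] X) ≤ 1)
    (h3 : LinearMap.rank ((A ^ 2 * B ^ 2 - B ^ 2 * A ^ 2 : X →L[ℂ] X) : X →ₗ[ℂ] X) ≤ 1)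
    (h4 : LinearMap.rank (((A * B) * (B * A) - (B * A) * (A * B) : X →L[ℂ] X) : X →ₗ[ℂ] X) ≤ 1) :
    φ y = 0 ∧ (A * B - B * A) ^ 2 = 0 :=
  stmt_1_general A B y φ hy hφ hAB h1 h2 h3
end

section
/- Let X be a complex Banach space and S a multiplicative semigroup of bounded operators on X such that rank[S,T] ≤ 1 for all S, T ∈ S. Suppose [A,B] = y ⊗ φ for some A, B ∈ S with y ∈ X and φ ∈ X* nonzero. Then φ(Cy) = 0 for every C ∈ S and also φ(y) = 0. -/
/-!
For a rank-one operator `ξ.smulRight w` (that is, `w ⊗ ξ`) we call `ξ w` its trace.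

Every commutator `[U, V] = w ⊗ ξ` of the semigroup has trace zero: since
`[U², V] = U [U, V] + [U, V] U` has rank at most one, either `w` is an eigenvector of `U` or `ξ` is
a left eigenvector of `U`, and likewise for `V`. Two eigenvectors, or two left eigenvectors, give
`ξ w = 0` at once; the mixed case is settled by looking at `[U², V²] = U [U, V²] + [U, V²] U`.

For the main claim write `[C, B] = u ⊗ g`, `[A, C] = v ⊗ h` and suppose `s = φ (C y) ≠ 0`. The six
rank-one operators `y ⊗ φC`, `Bv ⊗ h`, `u ⊗ gA`, `Cy ⊗ φ`, `v ⊗ hB`, `Au ⊗ g` have traces `± s`,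
and cyclically consecutive ones add up to commutators of products such as
`[CA, B] = C [A, B] + [C, B] A`, so they share their range or their kernel. Since
`φ y = g u = h v = 0`, the first, third and fifth operator each have their range inside the kernel
of the opposite one; a check of all cases on the hexagon leaves only the two alternating patterns,
and these contradict the Jacobi identity at `y`.
-/

open LinearMap Submodule

section

variable {K E : Type*} [Field K] [AddCommGroup E] [Module K E]

namespace Module.End

@[simp]
theorem mul_smulRight (T : Module.End K E) (ξ : Module.Dual K E) (w : E) :
    T * ξ.smulRight w = ξ.smulRight (T w) := by
  ext; simp

@[simp]
theorem smulRight_mul (T : Module.End K E) (ξ : Module.Dual K E) (w : E) :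
    ξ.smulRight w * T = (ξ ∘ₗ T).smulRight w := by
  ext; simp

end Module.End

theorem exists_eq_smulRight_of_rank_le_one {T : Module.End K E} (h : T.rank ≤ 1) :
    ∃ (w : E) (ξ : Module.Dual K E), T = ξ.smulRight w := by
  obtain ⟨w, hw⟩ := ((rank_le_one_iff_isPrincipal (range T)).1 h).principal
  have hTw (x : E) : ∃ r : K, r • w = T x := mem_span_singleton.1 (hw ▸ mem_range_self T x)
  by_cases hw0 : w = 0
  · refine ⟨0, 0, LinearMap.ext fun x => ?_⟩
    obtain ⟨r, hr⟩ := hTw x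
    simp [← hr, hw0]
  obtain ⟨ζ, hζ⟩ : ∃ ζ : Module.Dual K E, ζ w ≠ 0 := by
    simpa using (Module.forall_dual_apply_eq_zero_iff K w).not.2 hw0
  refine ⟨w, (ζ w)⁻¹ • (ζ ∘ₗ T), LinearMap.ext fun x => ?_⟩
  obtain ⟨r, hr⟩ := hTw x
  simp [← hr]
  field_simp

theorem sum_apply_eq_zero_of_sum_smulRight_eq_zero {ι : Type*} [Fintype ι]
    (f : ι → Module.Dual K E) (x : ι → E) (h : ∑ i, (f i).smulRight (x i) = 0) :
    ∑ i, f i (x i) = 0 := by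
  let W := span K (Set.range x)
  have : FiniteDimensional K W := FiniteDimensional.span_of_finite K (Set.finite_range x)
  let g (i : ι) : Module.End K W := (f i ∘ₗ W.subtype).smulRight ⟨x i, subset_span ⟨i, rfl⟩⟩
  have hg : ∑ i, g i = 0 := by
    ext w
    simpa [g] using congr($h w)
  simpa [g, trace_smulRight] using congr(LinearMap.trace K W $hg)

theorem eq_smul_or_eq_smul_of_rank_le_one {a b : E} {α β : Module.Dual K E}
    (hb : b ≠ 0) (hα : α ≠ 0) (h : (α.smulRight a + β.smulRight b).rank ≤ 1) :
    (∃ c : K, a = c • b) ∨ ∃ c : K, β = c • α := by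
  obtain ⟨w, ξ, hrep⟩ := exists_eq_smulRight_of_rank_le_one h
  have happ (x : E) : α x • a + β x • b = ξ x • w := by simpa using congr($hrep x)
  by_contra! hne
  have hind := LinearIndependent.pair_iff.1 <|
    (LinearIndependent.pair_iff' hb).2 fun c hc => hne.1 c hc.symm
  obtain ⟨x₀, hx₀⟩ : ∃ x₀, α x₀ ≠ 0 := DFunLike.ne_iff.1 hα
  have hξ₀ : ξ x₀ ≠ 0 := by
    intro h0
    refine hx₀ (hind (β x₀) (α x₀) ?_).2
    rw [add_comm, happ, h0, zero_smul]
  refine hne.2 (β x₀ / α x₀) (LinearMap.ext fun x => ?_)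
  have key := hind (ξ x₀ * β x - ξ x * β x₀) (ξ x₀ * α x - ξ x * α x₀) <| by
    linear_combination (norm := module) ξ x₀ • happ x - ξ x • happ x₀
  simp only [LinearMap.smul_apply, smul_eq_mul]
  field_simp
  apply mul_left_cancel₀ hξ₀
  linear_combination α x₀ * key.1 - β x₀ * key.2

theorem span_eq_or_ker_eq_of_rank_le_one {a b : E} {α β : Module.Dual K E}
    (ha : α a ≠ 0) (hb : β b ≠ 0) (h : (α.smulRight a + β.smulRight b).rank ≤ 1) :
    K ∙ a = K ∙ b ∨ ker α = ker β := by
  have hb0 : b ≠ 0 := by rintro rfl; simp at hb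
  have hα0 : α ≠ 0 := by rintro rfl; simp at ha
  rcases eq_smul_or_eq_smul_of_rank_le_one hb0 hα0 h with ⟨c, rfl⟩ | ⟨c, rfl⟩
  · have hc : c ≠ 0 := by rintro rfl; simp at ha
    exact .inl (span_singleton_smul_eq (IsUnit.mk0 c hc) b)
  · have hc : c ≠ 0 := by rintro rfl; simp at hb
    exact .inr (ker_smul α c hc).symm

theorem span_eq_or_ker_eq_of_rank_sub_le_one {a b : E} {α β : Module.Dual K E}
    (ha : α a ≠ 0) (hb : β b ≠ 0) (h : (α.smulRight a - β.smulRight b).rank ≤ 1) :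
    K ∙ a = K ∙ b ∨ ker α = ker β := by
  have e : α.smulRight a - β.smulRight b = α.smulRight a + (-β).smulRight b := by
    ext; simp [sub_eq_add_neg]
  simpa using span_eq_or_ker_eq_of_rank_le_one (β := -β) ha (by simpa using hb) (e ▸ h)

/-- Read `S i` and `K i` as the range and the kernel of the `i`-th of six rank-one operators placed
on a hexagon, and `R` as inclusion: each operator has nonzero trace, every second range lies in the
opposite kernel, and neighbours share their range or their kernel. -/
theorem alternating_of_hexagon {P Q : Type*} {R : P → Q → Prop}
    {S₀ S₁ S₂ S₃ S₄ S₅ : P} {K₀ K₁ K₂ K₃ K₄ K₅ : Q}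
    (h₀ : ¬ R S₀ K₀) (h₁ : ¬ R S₁ K₁) (h₂ : ¬ R S₂ K₂)
    (h₃ : ¬ R S₃ K₃) (h₄ : ¬ R S₄ K₄) (h₅ : ¬ R S₅ K₅)
    (o₀ : R S₀ K₃) (o₂ : R S₂ K₅) (o₄ : R S₄ K₁)
    (e₀ : S₀ = S₁ ∨ K₀ = K₁) (e₁ : S₁ = S₂ ∨ K₁ = K₂) (e₂ : S₂ = S₃ ∨ K₂ = K₃)
    (e₃ : S₃ = S₄ ∨ K₃ = K₄) (e₄ : S₄ = S₅ ∨ K₄ = K₅) (e₅ : S₅ = S₀ ∨ K₅ = K₀) :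
    (K₀ = K₁ ∧ S₁ = S₂ ∧ K₂ = K₃ ∧ S₃ = S₄ ∧ K₄ = K₅ ∧ S₅ = S₀) ∨
      (S₀ = S₁ ∧ K₁ = K₂ ∧ S₂ = S₃ ∧ K₃ = K₄ ∧ S₄ = S₅ ∧ K₅ = K₀) := by
  rcases e₀ with e₀ | e₀ <;> rcases e₁ with e₁ | e₁ <;> rcases e₂ with e₂ | e₂ <;>
    rcases e₃ with e₃ | e₃ <;> rcases e₄ with e₄ | e₄ <;> rcases e₅ with e₅ | e₅ <;>
    subst_vars <;> tauto

-- `γ` applied to the Jacobi identity at `y`, in the form needed for either alternating pattern.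
theorem mul_apply_eq_zero_of_jacobi {s : K} {y a b c d : E} {γ γ' δ δ' : Module.Dual K E}
    (hJ : s • y + (γ y • a - γ' y • b) + (δ y • c - δ' y • d) = 0)
    (hγa : γ a = -s) (hγb : γ b = 0) (hδc : δ c = -s) (hc : c ∈ K ∙ y) (hδ'y : δ' y = 0) :
    s * γ y = 0 := by
  obtain ⟨r, rfl⟩ := mem_span_singleton.1 hc
  have e := congr(γ $hJ)
  simp only [map_add, map_sub, map_smul, smul_eq_mul, hγa, hγb, hδ'y, map_zero] at e hδc
  linear_combination γ y * hδc - e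

theorem jacobi_apply {A B C : Module.End K E} {φ g h : Module.Dual K E} {y u v : E}
    (hAB : A * B - B * A = φ.smulRight y) (hCB : C * B - B * C = g.smulRight u)
    (hAC : A * C - C * A = h.smulRight v) (hφy : φ y = 0) :
    φ (C y) • y + (g y • A u - g (A y) • u) + (h y • B v - h (B y) • v) = 0 := by
  have e : (A * B - B * A) * C - C * (A * B - B * A) + (A * (C * B - B * C) - (C * B - B * C) * A)
      + (B * (A * C - C * A) - (A * C - C * A) * B) = 0 := by noncomm_ring
  rw [hAB, hCB, hAC] at e
  simpa [hφy] using congr($e y)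

structure IsRankOneCommutatorSemigroup (𝒮 : Set (Module.End K E)) : Prop where
  mul_mem {S T : Module.End K E} : S ∈ 𝒮 → T ∈ 𝒮 → S * T ∈ 𝒮
  rank_le_one {S T : Module.End K E} : S ∈ 𝒮 → T ∈ 𝒮 → (S * T - T * S).rank ≤ 1

theorem trace_eq_zero_of_common_eigenvector {U V : Module.End K E} {ξ : Module.Dual K E} {w : E}
    {a b : K} (hc : U * V - V * U = ξ.smulRight w) (hU : U w = a • w) (hV : V w = b • w) :
    ξ w = 0 := by
  have e := congr($hc w)
  simp only [LinearMap.sub_apply, Module.End.mul_apply, hU, hV, map_smul, smul_smul, mul_comm a,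
    sub_self, smulRight_apply] at e
  rcases smul_eq_zero.1 e.symm with h | rfl
  · exact h
  · exact map_zero ξ

theorem trace_eq_zero_of_common_left_eigenvector {U V : Module.End K E} {ξ : Module.Dual K E}
    {w : E} {a b : K} (hc : U * V - V * U = ξ.smulRight w) (hU : ξ ∘ₗ U = a • ξ)
    (hV : ξ ∘ₗ V = b • ξ) : ξ w = 0 := by
  have hU' (x : E) : ξ (U x) = a * ξ x := by simpa using congr($hU x)
  have hV' (x : E) : ξ (V x) = b * ξ x := by simpa using congr($hV x)
  have e := congr(ξ ($hc w))
  simp only [LinearMap.sub_apply, Module.End.mul_apply, map_sub, hU', hV', smulRight_apply,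
    map_smul, smul_eq_mul] at e
  exact mul_self_eq_zero.1 (by linear_combination -e)

namespace IsRankOneCommutatorSemigroup

variable {𝒮 : Set (Module.End K E)}

theorem eq_smul_or_comp_eq_smul (h𝒮 : IsRankOneCommutatorSemigroup 𝒮) {U W : Module.End K E}
    (hU : U ∈ 𝒮) (hW : W ∈ 𝒮) {ξ : Module.Dual K E} {b : E}
    (hc : U * W - W * U = ξ.smulRight b) (hb : b ≠ 0) (hξ : ξ ≠ 0) :
    (∃ c : K, U b = c • b) ∨ ∃ c : K, ξ ∘ₗ U = c • ξ := by
  apply eq_smul_or_eq_smul_of_rank_le_one hb hξ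
  have e : U * U * W - W * (U * U) = U * (U * W - W * U) + (U * W - W * U) * U := by
    noncomm_ring
  simpa [e, hc] using h𝒮.rank_le_one (h𝒮.mul_mem hU hU) hW

theorem trace_eq_zero_of_eigenvector_of_left_eigenvector (h𝒮 : IsRankOneCommutatorSemigroup 𝒮)
    {U V : Module.End K E} (hU : U ∈ 𝒮) (hV : V ∈ 𝒮) {ξ : Module.Dual K E} {w : E} {a b : K}
    (hc : U * V - V * U = ξ.smulRight w) (hUw : U w = a • w) (hξV : ξ ∘ₗ V = b • ξ) :
    ξ w = 0 := by
  by_cases hVw : ∃ c : K, V w = c • w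
  · obtain ⟨c, hVw⟩ := hVw
    exact trace_eq_zero_of_common_eigenvector hc hUw hVw
  push Not at hVw
  by_cases hξ : ξ = 0
  · simp [hξ]
  have hw : w ≠ 0 := by rintro rfl; exact hVw 0 (by simp)
  have hind := LinearIndependent.pair_iff.1 <|
    (LinearIndependent.pair_iff' hw).2 fun c hc => hVw c hc.symm
  have hv : b • w + V w ≠ 0 := fun h0 => hVw (-b) (by linear_combination (norm := module) h0)
  have hUV2 : U * (V * V) - V * V * U = ξ.smulRight (b • w + V w) := by
    have e : U * (V * V) - V * V * U = (U * V - V * U) * V + V * (U * V - V * U) := by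
      noncomm_ring
    rw [e, hc, Module.End.smulRight_mul, Module.End.mul_smulRight, hξV]
    ext; simp [smul_smul, mul_comm]
  have hUVw : U (V w) = a • V w + ξ w • w := by
    have e := congr($hc w)
    simp only [LinearMap.sub_apply, Module.End.mul_apply, hUw, map_smul, smulRight_apply] at e
    linear_combination (norm := module) e
  -- `U (b • w + V w) = a • (b • w + V w) + ξ w • w` with `w`, `V w` independent
  rcases h𝒮.eq_smul_or_comp_eq_smul hU (h𝒮.mul_mem hV hV) hUV2 hv hξ with ⟨c, hcv⟩ | ⟨c, hξU⟩
  · rw [map_add, map_smul, hUw, hUVw] at hcv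
    have key := hind ((a - c) * b + ξ w) (a - c) (by linear_combination (norm := module) hcv)
    linear_combination key.1 - b * key.2
  · exact trace_eq_zero_of_common_left_eigenvector hc hξU hξV

theorem trace_eq_zero (h𝒮 : IsRankOneCommutatorSemigroup 𝒮) {U V : Module.End K E}
    (hU : U ∈ 𝒮) (hV : V ∈ 𝒮) {ξ : Module.Dual K E} {w : E}
    (hc : U * V - V * U = ξ.smulRight w) : ξ w = 0 := by
  by_cases hw : w = 0
  · simp [hw]
  by_cases hξ : ξ = 0
  · simp [hξ]
  have hc' : V * U - U * V = (-ξ).smulRight w := by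
    rw [← neg_sub, hc]; ext; simp
  rcases h𝒮.eq_smul_or_comp_eq_smul hU hV hc hw hξ with ⟨a, hUw⟩ | ⟨a, hξU⟩ <;>
    rcases h𝒮.eq_smul_or_comp_eq_smul hV hU hc' hw (neg_ne_zero.2 hξ) with ⟨b, hVw⟩ | ⟨b, hξV⟩
  · exact trace_eq_zero_of_common_eigenvector hc hUw hVw
  · exact h𝒮.trace_eq_zero_of_eigenvector_of_left_eigenvector hU hV hc hUw (by simpa using hξV)
  · simpa using h𝒮.trace_eq_zero_of_eigenvector_of_left_eigenvector hV hU hc' hVw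
      (by simpa using hξU)
  · exact trace_eq_zero_of_common_left_eigenvector hc hξU (by simpa using hξV)

theorem trace_add_trace_eq_zero (h𝒮 : IsRankOneCommutatorSemigroup 𝒮) {U V : Module.End K E}
    (hU : U ∈ 𝒮) (hV : V ∈ 𝒮) {α β : Module.Dual K E} {a b : E}
    (hc : U * V - V * U = α.smulRight a + β.smulRight b) : α a + β b = 0 := by
  obtain ⟨w, ξ, hrep⟩ := exists_eq_smulRight_of_rank_le_one (h𝒮.rank_le_one hU hV)
  have hξw := h𝒮.trace_eq_zero hU hV hrep
  have hsum : α.smulRight a + β.smulRight b + (-ξ).smulRight w = 0 := by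
    rw [← hc, hrep]; ext; simp
  have := sum_apply_eq_zero_of_sum_smulRight_eq_zero ![α, β, -ξ] ![a, b, w]
    (by simpa [Fin.sum_univ_three] using hsum)
  simpa [Fin.sum_univ_three, hξw] using this

theorem trace_commutator_mul_eq_neg (h𝒮 : IsRankOneCommutatorSemigroup 𝒮) {A B C : Module.End K E}
    (hA : A ∈ 𝒮) (hB : B ∈ 𝒮) (hC : C ∈ 𝒮) {φ g : Module.Dual K E} {y u : E}
    (hAB : A * B - B * A = φ.smulRight y) (hCB : C * B - B * C = g.smulRight u) :
    g (A u) = -φ (C y) := by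
  have e : C * A * B - B * (C * A) = (g ∘ₗ A).smulRight u + φ.smulRight (C y) := by
    rw [show C * A * B - B * (C * A) = (C * B - B * C) * A + C * (A * B - B * A) by noncomm_ring,
      hCB, hAB]; simp
  simpa [eq_neg_iff_add_eq_zero] using h𝒮.trace_add_trace_eq_zero (h𝒮.mul_mem hC hA) hB e

theorem trace_mul_commutator_eq_neg (h𝒮 : IsRankOneCommutatorSemigroup 𝒮) {A B C : Module.End K E}
    (hA : A ∈ 𝒮) (hB : B ∈ 𝒮) (hC : C ∈ 𝒮) {φ h : Module.Dual K E} {y v : E}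
    (hAB : A * B - B * A = φ.smulRight y) (hAC : A * C - C * A = h.smulRight v) :
    h (B v) = -φ (C y) := by
  have e : A * (B * C) - B * C * A = (φ ∘ₗ C).smulRight y + h.smulRight (B v) := by
    rw [show A * (B * C) - B * C * A = (A * B - B * A) * C + B * (A * C - C * A) by noncomm_ring,
      hAB, hAC]; simp
  simpa [eq_neg_iff_add_eq_zero, add_comm] using
    h𝒮.trace_add_trace_eq_zero hA (h𝒮.mul_mem hB hC) e

theorem alternating_of_trace_mul_ne_zero (h𝒮 : IsRankOneCommutatorSemigroup 𝒮)
    {A B C : Module.End K E} (hA : A ∈ 𝒮) (hB : B ∈ 𝒮) (hC : C ∈ 𝒮) {φ g h : Module.Dual K E}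
    {y u v : E} (hAB : A * B - B * A = φ.smulRight y) (hCB : C * B - B * C = g.smulRight u)
    (hAC : A * C - C * A = h.smulRight v) (hs : φ (C y) ≠ 0) (hφy : φ y = 0) (hgu : g u = 0)
    (hhv : h v = 0) (hgAu : g (A u) = -φ (C y)) (hhBv : h (B v) = -φ (C y)) :
    (ker (φ ∘ₗ C) = ker h ∧ ker (g ∘ₗ A) = ker φ ∧ K ∙ A u = K ∙ y) ∨
      (K ∙ y = K ∙ B v ∧ ker φ = ker (h ∘ₗ B) ∧ ker g = ker (φ ∘ₗ C)) := by
  have c₀ : A * (B * C) - B * C * A = (φ ∘ₗ C).smulRight y + h.smulRight (B v) := by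
    rw [show A * (B * C) - B * C * A = (A * B - B * A) * C + B * (A * C - C * A) by noncomm_ring,
      hAB, hAC]; simp
  have c₁ : B * A * C - C * (B * A) = h.smulRight (B v) - (g ∘ₗ A).smulRight u := by
    rw [show B * A * C - C * (B * A) = B * (A * C - C * A) - (C * B - B * C) * A by noncomm_ring,
      hAC, hCB]; simp
  have c₂ : C * A * B - B * (C * A) = (g ∘ₗ A).smulRight u + φ.smulRight (C y) := by
    rw [show C * A * B - B * (C * A) = (C * B - B * C) * A + C * (A * B - B * A) by noncomm_ring,
      hCB, hAB]; simp
  have c₃ : A * (C * B) - C * B * A = φ.smulRight (C y) + (h ∘ₗ B).smulRight v := by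
    rw [show A * (C * B) - C * B * A = C * (A * B - B * A) + (A * C - C * A) * B by noncomm_ring,
      hAB, hAC]; simp
  have c₄ : A * B * C - C * (A * B) = (h ∘ₗ B).smulRight v - g.smulRight (A u) := by
    rw [show A * B * C - C * (A * B) = (A * C - C * A) * B - A * (C * B - B * C) by noncomm_ring,
      hAC, hCB]; simp
  have c₅ : A * C * B - B * (A * C) = g.smulRight (A u) + (φ ∘ₗ C).smulRight y := by
    rw [show A * C * B - B * (A * C) = A * (C * B - B * C) + (A * B - B * A) * C by noncomm_ring,
      hCB, hAB]; simp
  have t₀ : (φ ∘ₗ C) y ≠ 0 := hs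
  have t₁ : h (B v) ≠ 0 := by rw [hhBv]; exact neg_ne_zero.2 hs
  have t₂ : (g ∘ₗ A) u ≠ 0 := by rw [comp_apply, hgAu]; exact neg_ne_zero.2 hs
  have t₄ : (h ∘ₗ B) v ≠ 0 := t₁
  have t₅ : g (A u) ≠ 0 := t₂
  have orth {a : E} {α : Module.Dual K E} (h0 : α a = 0) : K ∙ a ≤ ker α :=
    (span_singleton_le_iff_mem _ _).2 h0
  have diag {a : E} {α : Module.Dual K E} (h0 : α a ≠ 0) : ¬ K ∙ a ≤ ker α :=
    fun hle => h0 ((span_singleton_le_iff_mem _ _).1 hle)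
  rcases alternating_of_hexagon (R := (· ≤ ·)) (diag t₀) (diag t₁) (diag t₂) (diag hs) (diag t₄)
      (diag t₅) (orth hφy) (orth hgu) (orth hhv)
      (span_eq_or_ker_eq_of_rank_le_one t₀ t₁ (c₀ ▸ h𝒮.rank_le_one hA (h𝒮.mul_mem hB hC)))
      (span_eq_or_ker_eq_of_rank_sub_le_one t₁ t₂ (c₁ ▸ h𝒮.rank_le_one (h𝒮.mul_mem hB hA) hC))
      (span_eq_or_ker_eq_of_rank_le_one t₂ hs (c₂ ▸ h𝒮.rank_le_one (h𝒮.mul_mem hC hA) hB))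
      (span_eq_or_ker_eq_of_rank_le_one hs t₄ (c₃ ▸ h𝒮.rank_le_one hA (h𝒮.mul_mem hC hB)))
      (span_eq_or_ker_eq_of_rank_sub_le_one t₄ t₅ (c₄ ▸ h𝒮.rank_le_one (h𝒮.mul_mem hA hB) hC))
      (span_eq_or_ker_eq_of_rank_le_one t₅ t₀ (c₅ ▸ h𝒮.rank_le_one (h𝒮.mul_mem hA hC) hB))
    with ⟨k₀₁, -, k₂₃, -, -, s₅₀⟩ | ⟨s₀₁, -, -, k₃₄, -, k₅₀⟩
  · exact .inl ⟨k₀₁, k₂₃, s₅₀⟩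
  · exact .inr ⟨s₀₁, k₃₄, k₅₀⟩

theorem trace_mul_eq_zero (h𝒮 : IsRankOneCommutatorSemigroup 𝒮) {A B C : Module.End K E}
    (hA : A ∈ 𝒮) (hB : B ∈ 𝒮) (hC : C ∈ 𝒮) {φ : Module.Dual K E} {y : E}
    (hAB : A * B - B * A = φ.smulRight y) : φ (C y) = 0 := by
  by_contra hs
  obtain ⟨u, g, hCB⟩ := exists_eq_smulRight_of_rank_le_one (h𝒮.rank_le_one hC hB)
  obtain ⟨v, h, hAC⟩ := exists_eq_smulRight_of_rank_le_one (h𝒮.rank_le_one hA hC)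
  have hφy : φ y = 0 := h𝒮.trace_eq_zero hA hB hAB
  have hgu : g u = 0 := h𝒮.trace_eq_zero hC hB hCB
  have hhv : h v = 0 := h𝒮.trace_eq_zero hA hC hAC
  have hgAu := h𝒮.trace_commutator_mul_eq_neg hA hB hC hAB hCB
  have hhBv := h𝒮.trace_mul_commutator_eq_neg hA hB hC hAB hAC
  have hJ := jacobi_apply hAB hCB hAC hφy
  rcases h𝒮.alternating_of_trace_mul_ne_zero hA hB hC hAB hCB hAC hs hφy hgu hhv hgAu hhBv with
    ⟨k₀₁, k₂₃, s₅₀⟩ | ⟨s₀₁, k₃₄, k₅₀⟩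
  · have hhy : h y ≠ 0 := fun h0 => hs (by rw [← comp_apply, ← mem_ker, k₀₁]; exact h0)
    refine mul_ne_zero hs hhy (mul_apply_eq_zero_of_jacobi (γ' := h ∘ₗ B) (δ' := g ∘ₗ A) (d := u)
      (by rw [comp_apply, comp_apply]; linear_combination (norm := module) hJ)
      hhBv hhv hgAu (by rw [← s₅₀]; exact mem_span_singleton_self _) ?_)
    rw [← mem_ker, k₂₃]; exact hφy
  · have hgy : g y ≠ 0 := fun h0 => hs (by rw [← comp_apply, ← mem_ker, ← k₅₀]; exact h0)
    refine mul_ne_zero hs hgy (mul_apply_eq_zero_of_jacobi (γ' := g ∘ₗ A) (δ' := h ∘ₗ B) (d := v)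
      (by rw [comp_apply, comp_apply]; exact hJ)
      hgAu hgu hhBv (by rw [s₀₁]; exact mem_span_singleton_self _) ?_)
    rw [← mem_ker, ← k₃₄]; exact hφy

end IsRankOneCommutatorSemigroup

theorem IsRankOneCommutatorSemigroup.image_toLinearMap {X : Type*} [TopologicalSpace X]
    [AddCommGroup X] [IsTopologicalAddGroup X] [Module K X] {𝒮 : Set (X →L[K] X)}
    (hmul : ∀ S ∈ 𝒮, ∀ T ∈ 𝒮, S * T ∈ 𝒮)
    (hrank : ∀ S ∈ 𝒮, ∀ T ∈ 𝒮, LinearMap.rank ((S * T - T * S : X →L[K] X) : X →ₗ[K] X) ≤ 1) :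
    IsRankOneCommutatorSemigroup ((↑) '' 𝒮 : Set (Module.End K X)) where
  mul_mem := by
    rintro _ _ ⟨S, hS, rfl⟩ ⟨T, hT, rfl⟩
    exact ⟨S * T, hmul S hS T hT, rfl⟩
  rank_le_one := by
    rintro _ _ ⟨S, hS, rfl⟩ ⟨T, hT, rfl⟩
    exact hrank S hS T hT

end

theorem stmt_2_general {X : Type*} [NormedAddCommGroup X] [NormedSpace ℂ X]
    (𝒮 : Set (X →L[ℂ] X)) (hmul : ∀ S ∈ 𝒮, ∀ T ∈ 𝒮, S * T ∈ 𝒮)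
    (hrank : ∀ S ∈ 𝒮, ∀ T ∈ 𝒮, LinearMap.rank ((S * T - T * S : X →L[ℂ] X) : X →ₗ[ℂ] X) ≤ 1)
    (A B : X →L[ℂ] X) (hA : A ∈ 𝒮) (hB : B ∈ 𝒮)
    (y : X) (φ : X →L[ℂ] ℂ)
    (hAB : A * B - B * A = φ.smulRight y) :
    (∀ C ∈ 𝒮, φ (C y) = 0) ∧ φ y = 0 := by
  have h𝒮 := IsRankOneCommutatorSemigroup.image_toLinearMap hmul hrank
  have hAB' : (A : Module.End ℂ X) * B - B * A = (φ : Module.Dual ℂ X).smulRight y := by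
    ext x
    simpa using congr($hAB x)
  exact ⟨fun C hC => h𝒮.trace_mul_eq_zero ⟨A, hA, rfl⟩ ⟨B, hB, rfl⟩ ⟨C, hC, rfl⟩ hAB',
    h𝒮.trace_eq_zero ⟨A, hA, rfl⟩ ⟨B, hB, rfl⟩ hAB'⟩

theorem stmt_2 {X : Type*} [NormedAddCommGroup X] [NormedSpace ℂ X] [CompleteSpace X]
    (𝒮 : Set (X →L[ℂ] X)) (hmul : ∀ S ∈ 𝒮, ∀ T ∈ 𝒮, S * T ∈ 𝒮)
    (hrank : ∀ S ∈ 𝒮, ∀ T ∈ 𝒮, LinearMap.rank ((S * T - T * S : X →L[ℂ] X) : X →ₗ[ℂ] X) ≤ 1)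
    (A B : X →L[ℂ] X) (hA : A ∈ 𝒮) (hB : B ∈ 𝒮)
    (y : X) (φ : X →L[ℂ] ℂ) (hy : y ≠ 0) (hφ : φ ≠ 0)
    (hAB : A * B - B * A = φ.smulRight y) :
    (∀ C ∈ 𝒮, φ (C y) = 0) ∧ φ y = 0 :=
  stmt_2_general 𝒮 hmul hrank A B hA hB y φ hAB
end

section
/- Let y ∈ X, φ ∈ X* with y ≠ 0, φ ≠ 0, φ(y) = 0 and φ(Cy) = 1 for an operator C, and suppose [AB,C] = (αy + βCy) ⊗ φ and φ(αy + βCy) = 0. Then β = 0, and the operator y ⊗ (αφ − C*φ) + (Cy) ⊗ φ has rank 2. -/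
theorem stmt_5 {X : Type*} [NormedAddCommGroup X] [NormedSpace ℂ X] [CompleteSpace X]
    (A B C : X →L[ℂ] X) (y : X) (φ : X →L[ℂ] ℂ) (hy : y ≠ 0) (hφ : φ ≠ 0)
    (h0 : φ y = 0) (h1 : φ (C y) = 1) (α β : ℂ)
    (hABC : (A * B) * C - C * (A * B) = φ.smulRight (α • y + β • C y))
    (htr : φ (α • y + β • C y) = 0) :
    β = 0 ∧
      LinearMap.rank (((α • φ - φ.comp C).smulRight y + φ.smulRight (C y) :
        X →L[ℂ] X) : X →ₗ[ℂ] X) = 2 := by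
  have hβ : β = 0 := by simpa [h0, h1] using htr
  refine ⟨hβ, ?_⟩
  set T : X →ₗ[ℂ] X := (((α • φ - φ.comp C).smulRight y + φ.smulRight (C y) :
      X →L[ℂ] X) : X →ₗ[ℂ] X) with hTdef
  have hT : ∀ x, T x = (α * φ x - φ (C x)) • y + φ x • C y := by
    intro x
    simp only [hTdef, ContinuousLinearMap.coe_add, LinearMap.add_apply,
      ContinuousLinearMap.coe_coe, ContinuousLinearMap.smulRight_apply,
      ContinuousLinearMap.sub_apply, ContinuousLinearMap.smul_apply,
      ContinuousLinearMap.comp_apply, smul_eq_mul]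
  -- pick u with φ u = 1
  obtain ⟨u0, hu0⟩ : ∃ u, φ u ≠ 0 := by
    by_contra h
    push_neg at h
    exact hφ (by ext x; simp [h x])
  set u : X := (φ u0)⁻¹ • u0 with hu_def
  have hu : φ u = 1 := by simp [hu_def, inv_mul_cancel₀ hu0]
  have hTy : T y = -y := by
    rw [hT]; simp [h0, h1]
  have hyr : y ∈ LinearMap.range T := ⟨-y, by rw [map_neg, hTy, neg_neg]⟩
  have hCyr : C y ∈ LinearMap.range T := by
    have h1' : T u - (α * φ u - φ (C u)) • y = C y := by
      rw [hT, hu]; simp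
    have : T u - (α * φ u - φ (C u)) • y ∈ LinearMap.range T :=
      sub_mem (LinearMap.mem_range_self T u) (Submodule.smul_mem _ _ hyr)
    rwa [h1'] at this
  have hrange : LinearMap.range T = Submodule.span ℂ {y, C y} := by
    apply le_antisymm
    · rintro _ ⟨x, rfl⟩
      rw [hT]
      exact add_mem
        (Submodule.smul_mem _ _ (Submodule.subset_span (Or.inl rfl)))
        (Submodule.smul_mem _ _ (Submodule.subset_span (Or.inr rfl)))
    · rw [Submodule.span_le]
      rintro z (rfl | rfl)
      · exact hyr
      · exact hCyr
  have li : LinearIndependent ℂ ![y, C y] := by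
    rw [LinearIndependent.pair_iff]
    intro s t hst
    have h1'' : t = 0 := by
      have := congrArg φ hst
      simpa [map_add, map_smul, h0, h1] using this
    subst h1''
    have hs : s • y = 0 := by simpa using hst
    rcases smul_eq_zero.mp hs with hs | hy'
    · exact ⟨hs, rfl⟩
    · exact absurd hy' hy
  have hset : Set.range ![y, C y] = ({y, C y} : Set X) := by
    ext z
    simp [Fin.exists_fin_two, eq_comm, or_comm]
  have hne : y ≠ C y := fun h => by rw [h, h1] at h0; exact one_ne_zero h0
  rw [LinearMap.rank, hrange, ← hset, rank_span li, hset]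
  rw [Cardinal.mk_insert (by simpa using hne), Cardinal.mk_singleton]
  norm_num
end

section
/- Let k, γ be complex numbers with k ≠ γ and β ≠ 0. Consider the 2×2 complex matrices C̃ = [[0, −kγ],[1, −k−γ]], D̃ = β·[[0,k],[0,1]] (i.e., β times column (k,1)ᵀ times row (0,1)), and Ẽ = β·[[0,γ],[0,1]]. If both commutators [D̃C̃, Ẽ] and [ẼC̃, D̃] have rank at most 1, then k = 0 and γ = 0. -/
/-!
A `2 × 2` matrix of rank at most `1` is singular, and a direct computation gives
`det [D̃C̃, Ẽ] = β⁴ k (γ - k)`. Since `C̃` is symmetric in `k` and `γ`, exchanging their roles gives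
`det [ẼC̃, D̃] = β⁴ γ (k - γ)`, and `β ≠ 0`, `k ≠ γ` force `k = γ = 0`.
-/

open Matrix

theorem Matrix.det_eq_zero_of_rank_lt {m R : Type*} [Fintype m] [DecidableEq m] [CommRing R]
    [IsDomain R] {A : Matrix m m R} (h : A.rank < Fintype.card m) : A.det = 0 := by
  by_contra hA
  exact h.ne (rank_of_det_ne_zero hA)

lemma smul_vecMulVec_cons_one {R : Type*} [CommRing R] (β a : R) :
    β • vecMulVec ![a, 1] ![0, 1] = !![0, β * a; 0, β] := by
  ext i j
  fin_cases i <;> fin_cases j <;> simp [mul_comm]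

lemma det_commutator_mul_companion {R : Type*} [CommRing R] (k γ β : R) :
    ((!![0, β * k; 0, β] * !![0, -(k * γ); 1, -k - γ]) * !![0, β * γ; 0, β]
      - !![0, β * γ; 0, β] * (!![0, β * k; 0, β] * !![0, -(k * γ); 1, -k - γ])).det
      = β ^ 4 * k * (γ - k) := by
  simp only [mul_fin_two, det_fin_two, Matrix.sub_apply, of_apply, cons_val', cons_val_zero,
    cons_val_one, cons_val_fin_one]
  ring

lemma eq_zero_of_pow_mul_mul_sub_eq_zero {R : Type*} [CommRing R] [IsDomain R] {k γ β : R}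
    (hkγ : k ≠ γ) (hβ : β ≠ 0) (h : β ^ 4 * k * (γ - k) = 0) : k = 0 := by
  simpa [hβ, sub_ne_zero.2 hkγ.symm] using h

theorem stmt_6 (k γ β : ℂ) (hkγ : k ≠ γ) (hβ : β ≠ 0)
    (C : Matrix (Fin 2) (Fin 2) ℂ) (D E : Matrix (Fin 2) (Fin 2) ℂ)
    (hC : C = !![0, -(k * γ); 1, -k - γ])
    (hD : D = β • Matrix.vecMulVec ![k, 1] ![0, 1])
    (hE : E = β • Matrix.vecMulVec ![γ, 1] ![0, 1])
    (h1 : ((D * C) * E - E * (D * C)).rank ≤ 1)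
    (h2 : ((E * C) * D - D * (E * C)).rank ≤ 1) :
    k = 0 ∧ γ = 0 := by
  rw [smul_vecMulVec_cons_one] at hD hE
  have hC_symm : C = !![0, -(γ * k); 1, -γ - k] := by rw [hC, mul_comm k γ, neg_sub_comm]
  subst hD hE
  have d1 := det_eq_zero_of_rank_lt (m := Fin 2) (Nat.lt_succ_of_le h1)
  have d2 := det_eq_zero_of_rank_lt (m := Fin 2) (Nat.lt_succ_of_le h2)
  rw [hC, det_commutator_mul_companion] at d1
  rw [hC_symm, det_commutator_mul_companion] at d2
  exact ⟨eq_zero_of_pow_mul_mul_sub_eq_zero hkγ hβ d1,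
    eq_zero_of_pow_mul_mul_sub_eq_zero hkγ.symm hβ d2⟩
end

section
/- Let X be a complex Banach space and suppose S is a semigroup of operators with rank[S,T] ≤ 1 for all S,T ∈ S containing operators A, B, C with [A,B] = y⊗φ, φ(y)=0, φ(Cy)=1. If [AB,C] = (αy + βCy) ⊗ (γφ + C*φ) (normalized δ = 1) and [BA,C] has rank ≤ 1, then α = 1 + βγ, β ≠ 0, and setting k = 1/β + γ one has [AB,C] = β(ky + Cy) ⊗ (γφ + C*φ) and [BA,C] = β(γy + Cy) ⊗ (kφ + C*φ). -/
/-!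
Write `P = AB`, `Q = BA`, so `P - Q = y ⊗ φ` and `[Q, C] = [P, C] - [y ⊗ φ, C]`. On the independent
vectors `y`, `Cy` the operator `[Q, C]` takes two values whose coefficient determinant is
`α - 1 - βγ`; it vanishes because `[Q, C]` has rank at most one.

If `β = 0`, then `[P, C] = y ⊗ ψ` and `[Q, C] = z ⊗ φ` with `ψ = γφ + φC` and `z = γy + Cy`.
Rank one of `[P, C²]` and `[Q, C²]` makes `ψ` an eigenvector of `C*` and `z` one of `C`. If `Qy` is
a multiple of `y`, then `z` is a common eigenvector of `Q` and `C`, so `[Q, C] z = 0`, against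
`φ z = 1`. Otherwise rank one of `[P, Q] = y ⊗ φQ - Qy ⊗ φ` makes `φ`, and then `ψ`, an eigenvector
of `P*`, so `ψ ∘ [P, C] = 0`, against `ψ y = 1`. The two formulas are then algebra.
-/

section RankOne

variable {K V W : Type*} [Field K] [AddCommGroup V] [Module K V] [AddCommGroup W] [Module K W]

theorem LinearMap.not_linearIndependent_pair_of_rank_le_one_s15 {f : V →ₗ[K] W}
    (hf : LinearMap.rank f ≤ 1) (v w : V) : ¬LinearIndependent K ![f v, f w] := by
  intro hli
  have hspan : Submodule.span K (Set.range ![f v, f w]) ≤ LinearMap.range f := by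
    rw [Submodule.span_le, Set.range_subset_iff]
    intro i
    fin_cases i <;> simp
  have h := (Submodule.rank_mono hspan).trans hf
  rw [rank_span hli] at h
  have h2 := Cardinal.lift_le.{0}.mpr h
  rw [Cardinal.mk_range_eq_of_injective hli.injective] at h2
  simp at h2

theorem LinearIndependent.pair_smul_add_smul {x₁ x₂ : W} (hx : LinearIndependent K ![x₁, x₂])
    {a b c d : K} (hdet : a * d - b * c ≠ 0) :
    LinearIndependent K ![a • x₁ + b • x₂, c • x₁ + d • x₂] := by
  rw [LinearIndependent.pair_iff] at hx ⊢
  intro s t hst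
  obtain ⟨h₁, h₂⟩ := hx (s * a + t * c) (s * b + t * d) (by rw [← hst]; module)
  refine ⟨(mul_eq_zero.mp ?_).resolve_right hdet, (mul_eq_zero.mp ?_).resolve_right hdet⟩
  · linear_combination d * h₁ - c * h₂
  · linear_combination a * h₂ - b * h₁

theorem LinearMap.det_eq_zero_of_rank_le_one {f : V →ₗ[K] W} (hf : LinearMap.rank f ≤ 1)
    {x₁ x₂ : W} (hx : LinearIndependent K ![x₁, x₂]) {v w : V} {a b c d : K}
    (hv : f v = a • x₁ + b • x₂) (hw : f w = c • x₁ + d • x₂) : a * d - b * c = 0 := by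
  by_contra hdet
  have := f.not_linearIndependent_pair_of_rank_le_one_s15 hf v w
  rw [hv, hw] at this
  exact this (hx.pair_smul_add_smul hdet)

theorem linearIndependent_pair_self_apply {x : V} {T : V →ₗ[K] V} {f : V →ₗ[K] K}
    (h₀ : f x = 0) (h₁ : f (T x) = 1) : LinearIndependent K ![x, T x] := by
  rw [LinearIndependent.pair_iff]
  intro s t hst
  have ht : t = 0 := by simpa [h₀, h₁] using congrArg f hst
  subst ht
  refine ⟨?_, rfl⟩
  simpa [h₁] using congrArg (f ∘ₗ T) hst

end RankOne

namespace ContinuousLinearMap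

variable {𝕜 X : Type*} [NontriviallyNormedField 𝕜] [NormedAddCommGroup X] [NormedSpace 𝕜 X]

theorem smulRight_mul_sub_mul_smulRight (f : X →L[𝕜] 𝕜) (x : X) (T : X →L[𝕜] X) :
    f.smulRight x * T - T * f.smulRight x = (f.comp T).smulRight x - f.smulRight (T x) := by
  ext v
  simp

theorem mul_sub_mul_eq_of_sub_eq_smulRight {P Q C : X →L[𝕜] X} {f : X →L[𝕜] 𝕜} {x : X}
    (hPQ : P - Q = f.smulRight x) :
    Q * C - C * Q = P * C - C * P - ((f.comp C).smulRight x - f.smulRight (C x)) := by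
  rw [← smulRight_mul_sub_mul_smulRight, ← hPQ]
  noncomm_ring

theorem mul_sub_mul_apply_eq_zero {S T : X →L[𝕜] X} {x : X} {a b : 𝕜} (hS : S x = a • x)
    (hT : T x = b • x) : (S * T - T * S) x = 0 := by
  simp [hS, hT, smul_smul, mul_comm]

theorem comp_mul_sub_mul_eq_zero {S T : X →L[𝕜] X} {f : X →L[𝕜] 𝕜} {a b : 𝕜}
    (hS : f.comp S = a • f) (hT : f.comp T = b • f) : f.comp (S * T - T * S) = 0 := by
  rw [comp_sub, mul_def, mul_def, ← comp_assoc, ← comp_assoc, hS, hT, smul_comp, smul_comp, hS, hT,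
    smul_smul, smul_smul, mul_comm, sub_self]

theorem mul_sq_sub_sq_mul_apply {P C : X →L[𝕜] X} {f : X →L[𝕜] 𝕜} {x : X}
    (hPC : P * C - C * P = f.smulRight x) (w : X) :
    (P * (C * C) - C * C * P) w = f (C w) • x + f w • C x := by
  have hLeibniz : P * (C * C) - C * C * P = (P * C - C * P) * C + C * (P * C - C * P) := by
    noncomm_ring
  rw [hLeibniz, hPC]
  simp

theorem comp_eq_smul_of_rank_mul_sq_sub_le_one {P C : X →L[𝕜] X} {f : X →L[𝕜] 𝕜} {x : X}
    (hPC : P * C - C * P = f.smulRight x) (hx : LinearIndependent 𝕜 ![x, C x]) (hfx : f x = 1)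
    (hrank : LinearMap.rank ((P * (C * C) - C * C * P : X →L[𝕜] X) : X →ₗ[𝕜] X) ≤ 1) :
    f.comp C = f (C x) • f := by
  ext w
  have hdet := LinearMap.det_eq_zero_of_rank_le_one hrank hx (mul_sq_sub_sq_mul_apply hPC x)
    (mul_sq_sub_sq_mul_apply hPC w)
  simp only [comp_apply, smul_apply, smul_eq_mul]
  linear_combination -hdet - f (C w) * hfx

theorem exists_apply_eq_smul_of_rank_mul_sq_sub_le_one {Q C : X →L[𝕜] X} {f : X →L[𝕜] 𝕜}
    {y z : X} (hQC : Q * C - C * Q = f.smulRight z) (hz : z ≠ 0) (h₀ : f y = 0) (h₁ : f (C y) = 1)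
    (hrank : LinearMap.rank ((Q * (C * C) - C * C * Q : X →L[𝕜] X) : X →ₗ[𝕜] X) ≤ 1) :
    ∃ ν : 𝕜, C z = ν • z := by
  by_contra! hν
  have hzCz : LinearIndependent 𝕜 ![z, C z] :=
    (LinearIndependent.pair_iff' hz).mpr fun a h ↦ hν a h.symm
  have hdet := LinearMap.det_eq_zero_of_rank_le_one hrank hzCz (mul_sq_sub_sq_mul_apply hQC y)
    (mul_sq_sub_sq_mul_apply hQC (C y))
  rw [h₀, h₁] at hdet
  norm_num at hdet

theorem comp_eq_smul_of_rank_mul_sub_le_one {P Q : X →L[𝕜] X} {f : X →L[𝕜] 𝕜} {x w : X}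
    (hPQ : P - Q = f.smulRight x) (hx : LinearIndependent 𝕜 ![x, Q x]) (hw : f w = 1)
    (hrank : LinearMap.rank ((P * Q - Q * P : X →L[𝕜] X) : X →ₗ[𝕜] X) ≤ 1) :
    f.comp Q = f (Q w) • f := by
  have hT (v : X) : (P * Q - Q * P) v = f (Q v) • x + (-f v) • Q x := by
    have hPQQ : P * Q - Q * P = (P - Q) * Q - Q * (P - Q) := by noncomm_ring
    rw [hPQQ, hPQ, smulRight_mul_sub_mul_smulRight]
    simp [sub_eq_add_neg]
  ext v
  have hdet := LinearMap.det_eq_zero_of_rank_le_one hrank hx (hT v) (hT w)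
  simp only [comp_apply, smul_apply, smul_eq_mul]
  linear_combination -hdet - f (Q v) * hw

theorem eq_one_add_mul_of_rank_mul_sub_le_one {P Q C : X →L[𝕜] X} {φ : X →L[𝕜] 𝕜} {y : X}
    {α β γ : 𝕜} (hPQ : P - Q = φ.smulRight y) (h₀ : φ y = 0) (h₁ : φ (C y) = 1)
    (hPC : P * C - C * P = (γ • φ + φ.comp C).smulRight (α • y + β • C y))
    (hrank : LinearMap.rank ((Q * C - C * Q : X →L[𝕜] X) : X →ₗ[𝕜] X) ≤ 1) :
    α = 1 + β * γ := by
  have hy : LinearIndependent 𝕜 ![y, C y] :=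
    linearIndependent_pair_self_apply (T := (C : X →ₗ[𝕜] X)) (f := (φ : X →ₗ[𝕜] 𝕜)) h₀ h₁
  have hQC := mul_sub_mul_eq_of_sub_eq_smulRight (C := C) hPQ
  rw [hPC] at hQC
  set κ := φ (C (C y))
  have hTy : (Q * C - C * Q) y = (α - 1) • y + β • C y := by
    simp only [hQC, sub_apply, smulRight_apply, add_apply, smul_apply, comp_apply, smul_eq_mul, h₀,
      h₁, mul_zero, zero_add, smul_add, one_smul, zero_smul, sub_zero]
    module
  have hTCy : (Q * C - C * Q) (C y) = ((γ + κ) * α - κ) • y + ((γ + κ) * β + 1) • C y := by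
    simp only [hQC, sub_apply, smulRight_apply, add_apply, smul_apply, comp_apply, smul_eq_mul, h₁,
      mul_one, smul_add, one_smul]
    module
  linear_combination LinearMap.det_eq_zero_of_rank_le_one hrank hy hTy hTCy

theorem mul_sub_mul_ne_smulRight_of_rank_le_one {P Q C : X →L[𝕜] X} {φ : X →L[𝕜] 𝕜} {y : X} (γ : 𝕜)
    (hPQ : P - Q = φ.smulRight y) (h₀ : φ y = 0) (h₁ : φ (C y) = 1)
    (hPC₂ : LinearMap.rank ((P * (C * C) - C * C * P : X →L[𝕜] X) : X →ₗ[𝕜] X) ≤ 1)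
    (hQC₂ : LinearMap.rank ((Q * (C * C) - C * C * Q : X →L[𝕜] X) : X →ₗ[𝕜] X) ≤ 1)
    (hPQ₁ : LinearMap.rank ((P * Q - Q * P : X →L[𝕜] X) : X →ₗ[𝕜] X) ≤ 1) :
    P * C - C * P ≠ (γ • φ + φ.comp C).smulRight y := by
  intro hPC
  set ψ := γ • φ + φ.comp C
  set z := γ • y + C y
  have hψy : ψ y = 1 := by simp [ψ, h₀, h₁]
  have hφz : φ z = 1 := by simp [z, h₀, h₁]
  have hz0 : z ≠ 0 := by rintro h; simp [h] at hφz
  have hy : LinearIndependent 𝕜 ![y, C y] :=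
    linearIndependent_pair_self_apply (T := (C : X →ₗ[𝕜] X)) (f := (φ : X →ₗ[𝕜] 𝕜)) h₀ h₁
  have hy0 : y ≠ 0 := hy.ne_zero 0
  have hQC : Q * C - C * Q = φ.smulRight z := by
    rw [mul_sub_mul_eq_of_sub_eq_smulRight hPQ, hPC]
    ext v
    simp only [sub_apply, smulRight_apply, add_apply, smul_apply, smul_eq_mul, comp_apply, smul_add,
      ψ, z]
    module
  have hψC := comp_eq_smul_of_rank_mul_sq_sub_le_one hPC hy hψy hPC₂
  obtain ⟨ν, hν⟩ := exists_apply_eq_smul_of_rank_mul_sq_sub_le_one hQC hz0 h₀ h₁ hQC₂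
  by_cases hQy : LinearIndependent 𝕜 ![y, Q y]
  · have hφQ := comp_eq_smul_of_rank_mul_sub_le_one hPQ hQy h₁ hPQ₁
    have hφP : φ.comp P = φ (Q (C y)) • φ := by
      rw [← sub_add_cancel P Q, hPQ, comp_add, hφQ]
      ext v
      simp [h₀]
    have hφCP : (φ.comp C).comp P = φ (Q (C y)) • φ.comp C := by
      ext v
      have h := congrArg (fun T ↦ φ (T v)) hPC
      have h' := congrArg (fun g ↦ g (C v)) hφP
      simp only [sub_apply, mul_apply_eq_comp, map_sub, smulRight_apply, map_smul, h₀, smul_eq_mul,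
        mul_zero, comp_apply, smul_apply] at h h'
      simp only [comp_apply, smul_apply, smul_eq_mul]
      linear_combination h' - h
    have hψP : ψ.comp P = φ (Q (C y)) • ψ := by
      simp only [ψ, add_comp, smul_comp, hφP, hφCP, smul_add, smul_comm γ]
    have h := congrArg (fun g ↦ g y) (comp_mul_sub_mul_eq_zero hψP hψC)
    simp [hPC, hψy] at h
  · obtain ⟨ρ, hρ⟩ : ∃ ρ : 𝕜, ρ • y = Q y := by
      simpa [LinearIndependent.pair_iff' hy0] using hQy
    have hQCy : Q (C y) = ρ • C y := by
      have h := congrArg (fun T ↦ T y) hQC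
      simp only [sub_apply, mul_apply_eq_comp, ← hρ, map_smul, smulRight_apply, h₀, zero_smul] at h
      exact sub_eq_zero.mp h
    have hQz : Q z = ρ • z := by simp [z, ← hρ, hQCy, smul_comm ρ γ]
    have h := mul_sub_mul_apply_eq_zero hQz hν
    rw [hQC, smulRight_apply, hφz, one_smul] at h
    exact hz0 h

end ContinuousLinearMap

open ContinuousLinearMap

theorem stmt_15_general {X : Type*} [NormedAddCommGroup X] [NormedSpace ℂ X]
    (𝒮 : Set (X →L[ℂ] X)) (hmul : ∀ S ∈ 𝒮, ∀ T ∈ 𝒮, S * T ∈ 𝒮)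
    (hrank : ∀ S ∈ 𝒮, ∀ T ∈ 𝒮, LinearMap.rank ((S * T - T * S : X →L[ℂ] X) : X →ₗ[ℂ] X) ≤ 1)
    (A B C : X →L[ℂ] X) (hA : A ∈ 𝒮) (hB : B ∈ 𝒮) (hC : C ∈ 𝒮)
    (y : X) (φ : X →L[ℂ] ℂ) (h0 : φ y = 0) (h1 : φ (C y) = 1) (α β γ : ℂ)
    (hAB : A * B - B * A = φ.smulRight y)
    (hABC : (A * B) * C - C * (A * B) = (γ • φ + φ.comp C).smulRight (α • y + β • C y))
    (hBAC : LinearMap.rank (((B * A) * C - C * (B * A) : X →L[ℂ] X) : X →ₗ[ℂ] X) ≤ 1) :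
    α = 1 + β * γ ∧ β ≠ 0 ∧
    (A * B) * C - C * (A * B) =
      β • (γ • φ + φ.comp C).smulRight ((1 / β + γ) • y + C y) ∧
    (B * A) * C - C * (B * A) =
      β • ((1 / β + γ) • φ + φ.comp C).smulRight (γ • y + C y) := by
  have hAB𝒮 := hmul A hA B hB
  have hBA𝒮 := hmul B hB A hA
  have hCC𝒮 := hmul C hC C hC
  have hα := eq_one_add_mul_of_rank_mul_sub_le_one hAB h0 h1 hABC hBAC
  have hβ : β ≠ 0 := by
    rintro rfl
    refine mul_sub_mul_ne_smulRight_of_rank_le_one γ hAB h0 h1 (hrank _ hAB𝒮 _ hCC𝒮)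
      (hrank _ hBA𝒮 _ hCC𝒮) (hrank _ hAB𝒮 _ hBA𝒮) ?_
    rw [hABC, hα]
    simp
  refine ⟨hα, hβ, ?_, ?_⟩
  · rw [hABC, hα]
    ext x
    simp only [smulRight_apply, add_apply, smul_apply, smul_eq_mul, comp_apply, smul_add, one_div]
    match_scalars <;> field_simp
  · rw [mul_sub_mul_eq_of_sub_eq_smulRight hAB, hABC, hα]
    ext x
    simp only [sub_apply, smulRight_apply, add_apply, smul_apply, smul_eq_mul, comp_apply, smul_add,
      one_div]
    match_scalars <;> field_simp <;> ring

theorem stmt_15 {X : Type*} [NormedAddCommGroup X] [NormedSpace ℂ X] [CompleteSpace X]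
    (𝒮 : Set (X →L[ℂ] X)) (hmul : ∀ S ∈ 𝒮, ∀ T ∈ 𝒮, S * T ∈ 𝒮)
    (hrank : ∀ S ∈ 𝒮, ∀ T ∈ 𝒮, LinearMap.rank ((S * T - T * S : X →L[ℂ] X) : X →ₗ[ℂ] X) ≤ 1)
    (A B C : X →L[ℂ] X) (hA : A ∈ 𝒮) (hB : B ∈ 𝒮) (hC : C ∈ 𝒮)
    (y : X) (φ : X →L[ℂ] ℂ) (h0 : φ y = 0) (h1 : φ (C y) = 1) (α β γ : ℂ)
    (hAB : A * B - B * A = φ.smulRight y)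
    (hABC : (A * B) * C - C * (A * B) = (γ • φ + φ.comp C).smulRight (α • y + β • C y))
    (hBAC : LinearMap.rank (((B * A) * C - C * (B * A) : X →L[ℂ] X) : X →ₗ[ℂ] X) ≤ 1) :
    α = 1 + β * γ ∧ β ≠ 0 ∧
    (A * B) * C - C * (A * B) =
      β • (γ • φ + φ.comp C).smulRight ((1 / β + γ) • y + C y) ∧
    (B * A) * C - C * (B * A) =
      β • ((1 / β + γ) • φ + φ.comp C).smulRight (γ • y + C y) :=
  stmt_15_general 𝒮 hmul hrank A B C hA hB hC y φ h0 h1 α β γ hAB hABC hBAC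
end

section
/- Let D = AB be a bounded operator on X = span{y} ⊕ span{Cy} ⊕ (ker φ ∩ ker C*φ) with matrix (d_ij), and suppose [A,B] is the matrix unit E₁₂ (i.e., [A,B]y = 0, [A,B](Cy) = y, [A,B] = 0 on ker φ ∩ ker C*φ). If rank[AB, BA] ≤ 1, where BA = AB − [A,B], then d₂₁ = 0 and moreover d₂₃ = 0 or d₃₁ = 0. -/
/-!
Write `D = AB` and `P = φ(·) y`, so that `BA = D - P` and `[D, BA] = PD - DP` maps
`x ↦ φ(Dx) y - φ(x) Dy`. If some `x ∈ ker φ` has `φ(Dx) ≠ 0`, the range of this commutator,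
of rank at most one, is spanned by `y`; its value at `Cy`, where `φ = 1`, is `φ(DCy) y - Dy`,
so `Dy ∈ span {y}`. Taking `x = y` this forces `φ(Dy) = 0`, and otherwise `φ ∘ D` vanishes
on `ker φ`.
-/

open Submodule

theorem LinearMap.mem_span_singleton_of_rank_le_one {K V W : Type*} [Field K] [AddCommGroup V]
    [Module K V] [AddCommGroup W] [Module K W] {f : V →ₗ[K] W} (hf : f.rank ≤ 1) {a : V}
    (ha : f a ≠ 0) (b : V) : f b ∈ K ∙ f a := by
  obtain ⟨v₀, hv₀⟩ := (rank_submodule_le_one_iff' (range f)).1 hf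
  obtain ⟨r, hr⟩ := mem_span_singleton.1 (hv₀ (mem_range_self f a))
  have hr0 : r ≠ 0 := by rintro rfl; exact ha (by rw [← hr, zero_smul])
  rw [← hr, span_singleton_smul_eq hr0.isUnit]
  exact hv₀ (mem_range_self f b)

theorem mul_swap_commutator_eq_of_commutator_eq {R : Type*} [Ring R] {a b p : R}
    (h : a * b - b * a = p) : a * b * (b * a) - b * a * (a * b) = p * (a * b) - a * b * p := by
  rw [← sub_sub_cancel (a * b) (b * a), h]
  noncomm_ring

theorem apply_mem_span_singleton_of_rank_le_one {K V : Type*} [Field K] [AddCommGroup V]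
    [Module K V] {T : V →ₗ[K] V} (hT : T.rank ≤ 1) {φ : V →ₗ[K] K} {D : V →ₗ[K] V} {y : V}
    (hTφ : ∀ x, T x = φ (D x) • y - φ x • D y) {x z : V} (hx : φ x = 0) (hDx : φ (D x) ≠ 0)
    (hz : φ z = 1) : D y ∈ K ∙ y := by
  rcases eq_or_ne y 0 with rfl | hy
  · rw [map_zero]
    exact zero_mem _
  have hTx : T x = φ (D x) • y := by rw [hTφ, hx, zero_smul, sub_zero]
  have hTz := T.mem_span_singleton_of_rank_le_one hT (a := x)
    (by rw [hTx]; exact smul_ne_zero hDx hy) z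
  rw [hTx, span_singleton_smul_eq hDx.isUnit, hTφ, hz, one_smul] at hTz
  have := (K ∙ y).sub_mem (smul_mem _ (φ (D z)) (mem_span_singleton_self y)) hTz
  rwa [sub_sub_cancel] at this

theorem stmt_17_general {X : Type*} [NormedAddCommGroup X] [NormedSpace ℂ X]
    (A B C : X →L[ℂ] X) (y : X) (φ : X →L[ℂ] ℂ)
    (h0 : φ y = 0) (h1 : φ (C y) = 1)
    (hAB : A * B - B * A = φ.smulRight y)
    (hrank : LinearMap.rank
      (((A * B) * (B * A) - (B * A) * (A * B) : X →L[ℂ] X) : X →ₗ[ℂ] X) ≤ 1) :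
    φ ((A * B) y) = 0 ∧
    ((∀ x : X, φ x = 0 → φ (C x) = 0 → φ ((A * B) x) = 0) ∨
      (A * B) y ∈ Submodule.span ℂ {y}) := by
  set D := A * B
  have hcomm : ∀ x, (D * (B * A) - B * A * D) x = φ (D x) • y - φ x • D y := by
    intro x
    rw [mul_swap_commutator_eq_of_commutator_eq hAB]
    change φ (D x) • y - D (φ x • y) = _
    rw [map_smul]
  have key : ∀ x, φ x = 0 → φ (D x) ≠ 0 → D y ∈ ℂ ∙ y := fun x hx hDx =>
    apply_mem_span_singleton_of_rank_le_one (φ := (φ : X →ₗ[ℂ] ℂ)) (D := (D : X →ₗ[ℂ] X))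
      hrank hcomm hx hDx h1
  have hd21 : φ (D y) = 0 := by
    by_contra h
    obtain ⟨c, hc⟩ := mem_span_singleton.1 (key y h0 h)
    exact h (by rw [← hc, map_smul, h0, smul_zero])
  exact ⟨hd21, or_iff_not_imp_right.2 fun hspan x hx _ => by_contra fun hDx => hspan (key x hx hDx)⟩

theorem stmt_17 {X : Type*} [NormedAddCommGroup X] [NormedSpace ℂ X] [CompleteSpace X]
    (A B C : X →L[ℂ] X) (y : X) (φ : X →L[ℂ] ℂ)
    (h0 : φ y = 0) (h1 : φ (C y) = 1)
    (hAB : A * B - B * A = φ.smulRight y)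
    (hrank : LinearMap.rank
      (((A * B) * (B * A) - (B * A) * (A * B) : X →L[ℂ] X) : X →ₗ[ℂ] X) ≤ 1) :
    φ ((A * B) y) = 0 ∧
    ((∀ x : X, φ x = 0 → φ (C x) = 0 → φ ((A * B) x) = 0) ∨
      (A * B) y ∈ Submodule.span ℂ {y}) :=
  stmt_17_general A B C y φ h0 h1 hAB hrank
end
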